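/- For every a ∈ I and every n ≥ 1, (1/2)·v_{N(n)}(1) ≤ sup_{y ∈ I} | G_{N,a}({x ∈ I : s_{n,a}(x) ∈ [0,y]}) − G_N([0,y]) |, where v_{N(n)}(1) = (1+N)·N^{n+1}/(q̃_{n+1}·q̃_{n+2}) and the sequence q̃ is defined by q̃_{−1}=0, q̃_0=1 and q̃_k = N(q̃_{k−1}+q̃_{k−2}) for k ≥ 1. -/

import Mathlib

open MeasureTheory Set Filter
open scoped Classical Topology ENNReal

/-- The N-continued fraction transformation `T_N x = N/x - ⌊N/x⌋` (with `T_N 0 = 0`). -/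
noncomputable def TN (N : ℕ) (x : ℝ) : ℝ := (N : ℝ) / x - ⌊(N : ℝ) / x⌋

/-- `digit N x k` is the (k+1)-st N-continued fraction digit `a_{k+1}(x) = ⌊N / T_N^k(x)⌋`. -/
noncomputable def digit (N : ℕ) (x : ℝ) (k : ℕ) : ℕ := ⌊(N : ℝ) / (TN N)^[k] x⌋₊

/-- The invariant (Gauss-type) measure `G_N(A) = (1/log((N+1)/N)) ∫_A dx/(x+N)` on `I = [0,1]`. -/
noncomputable def GN (N : ℕ) : Measure ℝ :=
  (volume.restrict (Icc (0:ℝ) 1)).withDensity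
    (fun x => ENNReal.ofReal ((Real.log ((N+1)/N))⁻¹ * (x + N)⁻¹))

/-- The conditional measure `G_{N,a}` with distribution function `(N+a)x/(ax+N)` on `[0,1]`,
i.e. with density `N(N+a)/(ax+N)²` with respect to Lebesgue measure on `[0,1]`. -/
noncomputable def GNa (N : ℕ) (a : ℝ) : Measure ℝ :=
  (volume.restrict (Icc (0:ℝ) 1)).withDensity
    (fun x => ENNReal.ofReal ((N : ℝ) * (N + a) / (a * x + N) ^ 2))

/-- `sSeq N a x n = s_{n,a}(x)`: `s_{0,a} = a`, `s_{n,a} = N/(s_{n-1,a} + a_n(x))`. -/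
noncomputable def sSeq (N : ℕ) (a x : ℝ) : ℕ → ℝ
  | 0 => a
  | (n+1) => (N : ℝ) / (sSeq N a x n + (digit N x n : ℝ))

/-- The sequence `q̃`, shifted: `qt N (k+1) = q̃_k` where `q̃_{-1}=0`, `q̃_0=1`,
`q̃_k = N(q̃_{k-1}+q̃_{k-2})`. -/
noncomputable def qt (N : ℕ) : ℕ → ℝ
  | 0 => 0
  | 1 => 1
  | (k+2) => (N : ℝ) * (qt N (k+1) + qt N k)

/-!
The points of `I` whose first `n` digits all equal `N` form the open interval with endpoints
`h^n(0)` and `h^n(1)`, where `h y = N/(y+N)` is the inverse branch of `T_N` for the digit `N`;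
on this cylinder `s_{n,a}` is constant, equal to `t = h^n(a)`. Hence the distribution function
of `s_{n,a}` under `G_{N,a}` jumps at `t` by at least the `G_{N,a}`-mass of the cylinder, while
`y ↦ G_N([0,y])` is Lipschitz, so the supremum of their distance is at least half that mass.
The mass is read off the distribution function `(N+a)x/(ax+N)` at `h^n(0) = N q̃_{n-1}/q̃_n`
and `h^n(1)`, using `q̃_n² - q̃_{n-1} q̃_{n+1} = (-N)^n`, and it dominates `v_{N(n)}(1)`.
-/

section

variable {N : ℕ}

theorem qt_add_two (N k : ℕ) : qt N (k + 2) = N * (qt N (k + 1) + qt N k) := rfl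

theorem qt_nonneg (N : ℕ) : ∀ k, 0 ≤ qt N k
  | 0 => le_rfl
  | 1 => zero_le_one
  | k + 2 => by
    rw [qt_add_two]
    have := qt_nonneg N k
    have := qt_nonneg N (k + 1)
    positivity

theorem qt_succ_pos (hN : 1 ≤ N) : ∀ k, 0 < qt N (k + 1)
  | 0 => one_pos
  | k + 1 => by
    rw [qt_add_two]
    have := qt_succ_pos hN k
    have := qt_nonneg N k
    have : (0 : ℝ) < N := by exact_mod_cast hN
    positivity

theorem qt_succ_sq_sub_mul (N : ℕ) :
    ∀ k, qt N (k + 1) ^ 2 - qt N k * qt N (k + 2) = (-(N : ℝ)) ^ k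
  | 0 => by simp [qt]
  | k + 1 => by
    have ih := qt_succ_sq_sub_mul N k
    rw [pow_succ]
    linear_combination (-(N : ℝ)) * ih + qt N (k + 2) * qt_add_two N k
      - qt N (k + 1) * qt_add_two N (k + 1)

/-- The inverse branch of `T_N` on the cylinder of the digit `N`. -/
noncomputable def invBranch (N : ℕ) (y : ℝ) : ℝ := N / (y + N)

theorem mapsTo_invBranch (N : ℕ) : MapsTo (invBranch N) (Icc 0 1) (Icc 0 1) := fun y hy =>
  ⟨by unfold invBranch; have := hy.1; positivity,
    div_le_one_of_le₀ (by linarith [hy.1])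
      (by linarith [hy.1, (N.cast_nonneg : (0 : ℝ) ≤ N)])⟩

theorem invBranch_iterate_zero (hN : 1 ≤ N) :
    ∀ k, (invBranch N)^[k] 0 = N * qt N k / qt N (k + 1)
  | 0 => by simp [qt]
  | k + 1 => by
    have hq := qt_succ_pos hN k
    have : (0 : ℝ) < N := by exact_mod_cast hN
    rw [Function.iterate_succ_apply', invBranch_iterate_zero hN k, invBranch, qt_add_two]
    field_simp
    ring

theorem div_sub_mem_uIoo {c p q x : ℝ} (hc : 0 < c) (hp : 0 ≤ p) (hq : 0 ≤ q)
    (hx : x ∈ uIoo (c / (p + c)) (c / (q + c))) : c / x - c ∈ uIoo p q := by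
  wlog hpq : p ≤ q generalizing p q
  · rw [uIoo_comm] at hx ⊢
    exact this hq hp hx (le_of_not_ge hpq)
  rw [uIoo_of_ge (div_le_div_of_nonneg_left hc.le (by linarith) (by linarith))] at hx
  have hx0 : 0 < x := lt_trans (by positivity) hx.1
  rw [uIoo_of_le hpq]
  constructor
  · rw [lt_sub_iff_add_lt, lt_div_iff₀ hx0, ← lt_div_iff₀' (by linarith)]
    exact hx.2
  · rw [sub_lt_iff_lt_add, div_lt_iff₀ hx0, ← div_lt_iff₀' (by linarith)]
    exact hx.1

theorem digit_succ (N : ℕ) (x : ℝ) (j : ℕ) : digit N x (j + 1) = digit N (TN N x) j := by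
  simp only [digit, Function.iterate_succ_apply]

theorem digit_eq_of_mem_uIoo_iterate (hN : 1 ≤ N) :
    ∀ k x, x ∈ uIoo ((invBranch N)^[k] 0) ((invBranch N)^[k] 1) → ∀ j < k, digit N x j = N
  | 0, _, _, _, hj => absurd hj (Nat.not_lt_zero _)
  | k + 1, x, hx, j, hj => by
    have hN0 : (0 : ℝ) < N := by exact_mod_cast hN
    have hmem : ∀ z ∈ Icc (0 : ℝ) 1, (invBranch N)^[k] z ∈ Icc (0 : ℝ) 1 :=
      fun z hz => (mapsTo_invBranch N).iterate k hz
    simp only [Function.iterate_succ_apply'] at hx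
    have hy := div_sub_mem_uIoo hN0 (hmem 0 (by simp)).1 (hmem 1 (by simp)).1 hx
    have hy01 := uIoo_subset_Ioo (hmem 0 (by simp)) (hmem 1 (by simp)) hy
    have hfloor : ⌊(N : ℝ) / x⌋₊ = N :=
      Nat.floor_eq_iff' (by omega) |>.mpr ⟨by linarith [hy01.1], by linarith [hy01.2]⟩
    cases j with
    | zero => simpa [digit] using hfloor
    | succ j =>
      have hT : TN N x = N / x - N := by
        rw [TN, ← Int.natCast_floor_eq_floor (by linarith [hy01.1]), hfloor]; rfl
      rw [digit_succ, hT]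
      exact digit_eq_of_mem_uIoo_iterate hN k _ hy j (by omega)

theorem sSeq_eq_iterate {a x : ℝ} :
    ∀ k, (∀ j < k, digit N x j = N) → sSeq N a x k = (invBranch N)^[k] a
  | 0, _ => rfl
  | k + 1, h => by
    rw [Function.iterate_succ_apply', ← sSeq_eq_iterate k fun j hj => h j (by omega), sSeq,
      h k k.lt_succ_self, invBranch]

noncomputable def cdfGNa (N : ℕ) (a x : ℝ) : ℝ := (N + a) * x / (a * x + N)

theorem hasDerivAt_cdfGNa {a x : ℝ} (hx : a * x + N ≠ 0) :
    HasDerivAt (cdfGNa N a) (N * (N + a) / (a * x + N) ^ 2) x := by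
  refine (((hasDerivAt_id' x).const_mul ((N : ℝ) + a)).div
    (((hasDerivAt_id' x).const_mul a).add_const (N : ℝ)) hx).congr_deriv ?_
  ring

theorem GNa_Ioo (hN : 1 ≤ N) {a l r : ℝ} (ha : 0 ≤ a) (hl : 0 ≤ l) (hlr : l ≤ r)
    (hr : r ≤ 1) :
    GNa N a (Ioo l r) = ENNReal.ofReal (cdfGNa N a r - cdfGNa N a l) := by
  have hden : ∀ x ∈ Icc l r, 0 < a * x + N := fun x hx => by
    have : (0 : ℝ) < N := by exact_mod_cast hN
    have := mul_nonneg ha (hl.trans hx.1)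
    linarith
  have hcont : ContinuousOn (fun x : ℝ => N * (N + a) / (a * x + N) ^ 2) (Icc l r) :=
    continuousOn_const.div (by fun_prop) fun x hx => (pow_pos (hden x hx) 2).ne'
  rw [GNa, withDensity_apply _ measurableSet_Ioo, Measure.restrict_restrict measurableSet_Ioo,
    inter_eq_self_of_subset_left (Ioo_subset_Icc_self.trans (Icc_subset_Icc hl hr)),
    ← ofReal_integral_eq_lintegral_ofReal (hcont.integrableOn_Icc.mono_set Ioo_subset_Icc_self)
      (ae_of_all _ fun x => by positivity),
    ← integral_Ioc_eq_integral_Ioo, ← intervalIntegral.integral_of_le hlr,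
    intervalIntegral.integral_eq_sub_of_hasDerivAt]
  · intro x hx
    rw [uIcc_of_le hlr] at hx
    exact hasDerivAt_cdfGNa (hden x hx).ne'
  · exact (hcont.mono (uIcc_of_le hlr).le).intervalIntegrable

theorem cdfGNa_sub_cdfGNa {a l r : ℝ} (hl : a * l + N ≠ 0) (hr : a * r + N ≠ 0) :
    cdfGNa N a r - cdfGNa N a l = N * (N + a) * (r - l) / ((a * r + N) * (a * l + N)) := by
  unfold cdfGNa
  field_simp
  ring

theorem GNa_uIoo_toReal (hN : 1 ≤ N) {a l r : ℝ} (ha : 0 ≤ a) (hl : l ∈ Icc (0 : ℝ) 1)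
    (hr : r ∈ Icc (0 : ℝ) 1) : (GNa N a (uIoo l r)).toReal = |cdfGNa N a r - cdfGNa N a l| := by
  wlog hlr : l ≤ r generalizing l r
  · rw [uIoo_comm, abs_sub_comm]
    exact this hr hl (le_of_not_ge hlr)
  have hN0 : (0 : ℝ) < N := by exact_mod_cast hN
  have hpos : ∀ x ∈ Icc (0 : ℝ) 1, 0 < a * x + N := fun x hx => by
    have := mul_nonneg ha hx.1
    linarith
  have hsub : 0 ≤ cdfGNa N a r - cdfGNa N a l := by
    rw [cdfGNa_sub_cdfGNa (hpos l hl).ne' (hpos r hr).ne']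
    have := hpos l hl
    have := hpos r hr
    have : 0 ≤ r - l := by linarith
    positivity
  rw [uIoo_of_le hlr, GNa_Ioo hN ha hl.1 hlr hr.2, ENNReal.toReal_ofReal hsub, abs_of_nonneg hsub]

theorem cdfGNa_invBranch_iterate_zero (hN : 1 ≤ N) {a : ℝ} (ha : 0 ≤ a) (k : ℕ) :
    cdfGNa N a ((invBranch N)^[k] 0) = (N + a) * qt N k / (a * qt N k + qt N (k + 1)) := by
  have hN0 : (0 : ℝ) < N := by exact_mod_cast hN
  have hq := qt_succ_pos hN k
  have := mul_nonneg ha (qt_nonneg N k)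
  rw [invBranch_iterate_zero hN, cdfGNa]
  field_simp

theorem GNa_cylinder_toReal (hN : 1 ≤ N) {a : ℝ} (ha : a ∈ Icc (0 : ℝ) 1) (n : ℕ) :
    (GNa N a (uIoo ((invBranch N)^[n] 0) ((invBranch N)^[n] 1))).toReal =
      (N + a) * N ^ n / ((a * qt N n + qt N (n + 1)) * (a * qt N (n + 1) + qt N (n + 2))) := by
  have hN0 : (0 : ℝ) < N := by exact_mod_cast hN
  have h01 : invBranch N 0 = 1 := by simp [invBranch, hN0.ne']
  have hmem : ∀ z ∈ Icc (0 : ℝ) 1, (invBranch N)^[n] z ∈ Icc (0 : ℝ) 1 :=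
    fun z hz => (mapsTo_invBranch N).iterate n hz
  have hA : 0 < a * qt N n + qt N (n + 1) := by
    have := mul_nonneg ha.1 (qt_nonneg N n); linarith [qt_succ_pos hN n]
  have hB : 0 < a * qt N (n + 1) + qt N (n + 2) := by
    have := mul_nonneg ha.1 (qt_nonneg N (n + 1)); linarith [qt_succ_pos hN (n + 1)]
  rw [GNa_uIoo_toReal hN ha.1 (hmem 0 (by simp)) (hmem 1 (by simp)), ← h01,
    ← Function.iterate_succ_apply, cdfGNa_invBranch_iterate_zero hN ha.1,
    cdfGNa_invBranch_iterate_zero hN ha.1, div_sub_div _ _ hB.ne' hA.ne']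
  have hdet := qt_succ_sq_sub_mul N n
  rw [show (N + a) * qt N (n + 1) * (a * qt N n + qt N (n + 1))
      - (a * qt N (n + 1) + qt N (n + 2)) * ((N + a) * qt N n) = (N + a) * (-(N : ℝ)) ^ n by
    linear_combination (N + a) * hdet]
  rw [abs_div, abs_mul, abs_pow, abs_neg, abs_of_pos (mul_pos hB hA), Nat.abs_cast,
    abs_of_nonneg (by linarith [ha.1]), mul_comm (a * qt N (n + 1) + _)]

theorem v_le_cylinder_mass (hN : 1 ≤ N) {a : ℝ} (ha : a ∈ Icc (0 : ℝ) 1) (n : ℕ) :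
    (1 + N) * N ^ (n + 1) / (qt N (n + 2) * qt N (n + 3)) ≤
      (N + a) * N ^ n / ((a * qt N n + qt N (n + 1)) * (a * qt N (n + 1) + qt N (n + 2))) := by
  have hN1 : (1 : ℝ) ≤ N := by exact_mod_cast hN
  have hp := qt_nonneg N n
  have hq := qt_succ_pos hN n
  have hr := qt_succ_pos hN (n + 1)
  have hs := qt_succ_pos hN (n + 2)
  have hA : 0 < a * qt N n + qt N (n + 1) := by nlinarith [ha.1]
  have hB : 0 < a * qt N (n + 1) + qt N (n + 2) := by nlinarith [ha.1]
  have hr_eq : qt N (n + 2) = N * (qt N (n + 1) + qt N n) := qt_add_two N n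
  have hs_eq : qt N (n + 3) = N * (qt N (n + 2) + qt N (n + 1)) := qt_add_two N (n + 1)
  -- The difference of the two sides is concave in `a`, and nonnegative at `a = 0` and `a = 1`.
  have hconcave : (N + a) * qt N (n + 2) * qt N (n + 3)
        - N * (1 + N) * (a * qt N n + qt N (n + 1)) * (a * qt N (n + 1) + qt N (n + 2)) =
      (1 - a) * (N * qt N (n + 2) * (N * qt N (n + 2) - qt N (n + 1)))
        + a * ((N + 1) * (N - 1) * qt N (n + 2) * (qt N (n + 2) + qt N (n + 1)))
        + N * (1 + N) * qt N n * qt N (n + 1) * (a * (1 - a)) := by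
    rw [hs_eq, hr_eq]; ring
  have hend0 : 0 ≤ N * qt N (n + 2) * (N * qt N (n + 2) - qt N (n + 1)) := by
    have : qt N (n + 1) ≤ N * qt N (n + 2) := by rw [hr_eq]; nlinarith
    have := mul_pos (by linarith : (0 : ℝ) < N) hr
    nlinarith
  have hend1 : 0 ≤ (N + 1) * (N - 1) * qt N (n + 2) * (qt N (n + 2) + qt N (n + 1)) := by
    have : (0 : ℝ) ≤ N - 1 := by linarith
    positivity
  have hmid : 0 ≤ N * (1 + N) * qt N n * qt N (n + 1) * (a * (1 - a)) := by
    have := mul_nonneg ha.1 (sub_nonneg.mpr ha.2)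
    positivity
  have hcross : N * (1 + N) * (a * qt N n + qt N (n + 1)) * (a * qt N (n + 1) + qt N (n + 2)) ≤
      (N + a) * qt N (n + 2) * qt N (n + 3) := by
    linarith [mul_nonneg (sub_nonneg.mpr ha.2) hend0, mul_nonneg ha.1 hend1]
  rw [div_le_div_iff₀ (mul_pos hr hs) (mul_pos hA hB)]
  calc (1 + N) * (N : ℝ) ^ (n + 1)
        * ((a * qt N n + qt N (n + 1)) * (a * qt N (n + 1) + qt N (n + 2)))
      = (N : ℝ) ^ n *
          (N * (1 + N) * (a * qt N n + qt N (n + 1)) * (a * qt N (n + 1) + qt N (n + 2))) := by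
        ring
    _ ≤ (N : ℝ) ^ n * ((N + a) * qt N (n + 2) * qt N (n + 3)) := by gcongr
    _ = (N + a) * N ^ n * (qt N (n + 2) * qt N (n + 3)) := by ring

theorem log_add_one_div_nonneg (hN : 1 ≤ N) : 0 ≤ Real.log ((N + 1) / N) := by
  have hN0 : (0 : ℝ) < N := by exact_mod_cast hN
  exact Real.log_nonneg ((le_div_iff₀ hN0).mpr (by linarith))

theorem GN_le_smul (hN : 1 ≤ N) :
    GN N ≤ ENNReal.ofReal ((Real.log ((N + 1) / N))⁻¹ * (N : ℝ)⁻¹) •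
      volume.restrict (Icc 0 1) := by
  have := log_add_one_div_nonneg hN
  rw [GN, ← withDensity_const]
  refine withDensity_mono ((ae_restrict_mem measurableSet_Icc).mono fun x hx => ?_)
  apply ENNReal.ofReal_le_ofReal
  gcongr
  linarith [hx.1]

theorem GNa_le_smul (hN : 1 ≤ N) {a : ℝ} (ha : 0 ≤ a) :
    GNa N a ≤ ENNReal.ofReal ((N + a) / N) • volume.restrict (Icc 0 1) := by
  have hN0 : (0 : ℝ) < N := by exact_mod_cast hN
  rw [GNa, ← withDensity_const]
  refine withDensity_mono ((ae_restrict_mem measurableSet_Icc).mono fun x hx => ?_)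
  have hax := mul_nonneg ha hx.1
  have hsq : (N : ℝ) ^ 2 ≤ (a * x + N) ^ 2 := by
    gcongr
    linarith
  apply ENNReal.ofReal_le_ofReal
  rw [div_le_div_iff₀ (by nlinarith) hN0]
  nlinarith [mul_le_mul_of_nonneg_left hsq (by linarith : (0 : ℝ) ≤ N + a)]

theorem isFiniteMeasure_GN (hN : 1 ≤ N) : IsFiniteMeasure (GN N) := by
  have := (volume.restrict (Icc (0 : ℝ) 1)).smul_finite
    (ENNReal.ofReal_ne_top (r := (Real.log ((N + 1) / N))⁻¹ * (N : ℝ)⁻¹))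
  exact isFiniteMeasure_of_le _ (GN_le_smul hN)

theorem isFiniteMeasure_GNa (hN : 1 ≤ N) {a : ℝ} (ha : 0 ≤ a) :
    IsFiniteMeasure (GNa N a) := by
  have := (volume.restrict (Icc (0 : ℝ) 1)).smul_finite
    (ENNReal.ofReal_ne_top (r := (N + a) / N))
  exact isFiniteMeasure_of_le _ (GNa_le_smul hN ha)

theorem GN_Icc_toReal_sub_le (hN : 1 ≤ N) {y t : ℝ} (hyt : y ≤ t) :
    (GN N (Icc 0 t)).toReal - (GN N (Icc 0 y)).toReal ≤
      (Real.log ((N + 1) / N))⁻¹ * (N : ℝ)⁻¹ * (t - y) := by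
  have := isFiniteMeasure_GN hN
  set C := (Real.log ((N + 1) / N))⁻¹ * (N : ℝ)⁻¹
  have hN0 : (0 : ℝ) < N := by exact_mod_cast hN
  have hC : 0 ≤ C :=
    mul_nonneg (inv_nonneg.mpr (log_add_one_div_nonneg hN)) (inv_nonneg.mpr hN0.le)
  have hIoc : GN N (Ioc y t) ≤ ENNReal.ofReal (C * (t - y)) :=
    calc GN N (Ioc y t) ≤ ENNReal.ofReal C * volume (Ioc y t) := by
          grw [GN_le_smul hN, Measure.smul_apply, smul_eq_mul, Measure.restrict_apply_le]
      _ = ENNReal.ofReal (C * (t - y)) := by rw [Real.volume_Ioc, ← ENNReal.ofReal_mul hC]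
  have h1 := measureReal_mono (μ := GN N) (Icc_subset_Icc_union_Ioc (a := 0) (b := y) (c := t))
  have h2 := measureReal_union_le (μ := GN N) (Icc 0 y) (Ioc y t)
  have h3 := ENNReal.toReal_le_of_le_ofReal (mul_nonneg hC (sub_nonneg.mpr hyt)) hIoc
  simp only [measureReal_def] at h1 h2
  linarith

theorem abs_sub_le_iSup_Icc {μ ν : Measure ℝ} [IsFiniteMeasure μ] [IsFiniteMeasure ν]
    (A : ℝ → Set ℝ) (hA : ∀ y < 0, A y = ∅) {y : ℝ} (hy : y ≤ 1) :
    |(μ (A y)).toReal - (ν (Icc 0 y)).toReal| ≤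
      ⨆ z : Icc (0 : ℝ) 1, |(μ (A z)).toReal - (ν (Icc 0 z)).toReal| := by
  rcases lt_or_ge y 0 with hy0 | hy0
  · simpa [hA y hy0, Icc_eq_empty_of_lt hy0] using Real.iSup_nonneg fun _ => abs_nonneg _
  refine le_ciSup (f := fun z : Icc (0 : ℝ) 1 => |(μ (A z)).toReal - (ν (Icc 0 z)).toReal|)
    ⟨μ.real univ + ν.real univ, ?_⟩ ⟨y, hy0, hy⟩
  rintro _ ⟨z, rfl⟩
  refine (abs_sub _ _).trans ?_
  rw [abs_of_nonneg ENNReal.toReal_nonneg, abs_of_nonneg ENNReal.toReal_nonneg]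
  exact add_le_add (measureReal_mono (subset_univ _)) (measureReal_mono (subset_univ _))

theorem le_two_mul_of_jump {F G : ℝ → ℝ} {t J C S : ℝ}
    (hF : ∀ y < t, F y + J ≤ F t) (hG : ∀ y < t, G t - G y ≤ C * (t - y))
    (hS : ∀ y ≤ t, |F y - G y| ≤ S) : J ≤ 2 * S := by
  have hbound : ∀ y < t, J ≤ 2 * S + C * (t - y) := fun y hy => by
    have h1 := abs_le.mp (hS y hy.le)
    have h2 := abs_le.mp (hS t le_rfl)
    linarith [hF y hy, hG y hy]
  have hlim : Tendsto (fun y => 2 * S + C * (t - y)) (𝓝[<] t) (𝓝 (2 * S)) := by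
    have hcont : Continuous fun y => 2 * S + C * (t - y) := by fun_prop
    simpa using (hcont.tendsto t).mono_left nhdsWithin_le_nhds
  exact ge_of_tendsto hlim (eventually_nhdsWithin_of_forall hbound)

theorem GNa_sSeq_add_cylinder_le (hN : 1 ≤ N) {a : ℝ} (ha : a ∈ Icc (0 : ℝ) 1) (n : ℕ)
    {y : ℝ} (hy : y < (invBranch N)^[n] a) :
    (GNa N a {x ∈ Icc (0 : ℝ) 1 | sSeq N a x n ∈ Icc 0 y}).toReal
        + (GNa N a (uIoo ((invBranch N)^[n] 0) ((invBranch N)^[n] 1))).toReal ≤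
      (GNa N a {x ∈ Icc (0 : ℝ) 1 | sSeq N a x n ∈ Icc 0 ((invBranch N)^[n] a)}).toReal := by
  have := isFiniteMeasure_GNa hN ha.1
  have hmem : ∀ z ∈ Icc (0 : ℝ) 1, (invBranch N)^[n] z ∈ Icc (0 : ℝ) 1 :=
    fun z hz => (mapsTo_invBranch N).iterate n hz
  have hcyl : ∀ x ∈ uIoo ((invBranch N)^[n] 0) ((invBranch N)^[n] 1),
      x ∈ Icc (0 : ℝ) 1 ∧ sSeq N a x n = (invBranch N)^[n] a := fun x hx =>
    ⟨Ioo_subset_Icc_self (uIoo_subset_Ioo (hmem 0 (by simp)) (hmem 1 (by simp)) hx),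
      sSeq_eq_iterate n (digit_eq_of_mem_uIoo_iterate hN n x hx)⟩
  have hdisj : Disjoint {x ∈ Icc (0 : ℝ) 1 | sSeq N a x n ∈ Icc 0 y}
      (uIoo ((invBranch N)^[n] 0) ((invBranch N)^[n] 1)) :=
    disjoint_left.mpr fun x hx hx' => by
      have := hx.2.2
      rw [(hcyl x hx').2] at this
      linarith
  have hsub : {x ∈ Icc (0 : ℝ) 1 | sSeq N a x n ∈ Icc 0 y} ∪
      uIoo ((invBranch N)^[n] 0) ((invBranch N)^[n] 1) ⊆
        {x ∈ Icc (0 : ℝ) 1 | sSeq N a x n ∈ Icc 0 ((invBranch N)^[n] a)} := by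
    rintro x (hx | hx)
    · exact ⟨hx.1, hx.2.1, hx.2.2.trans hy.le⟩
    · exact ⟨(hcyl x hx).1, by rw [(hcyl x hx).2]; exact ⟨(hmem a ha).1, le_rfl⟩⟩
  have hunion := measureReal_union (μ := GNa N a) hdisj measurableSet_Ioo
  have hmono := measureReal_mono (μ := GNa N a) hsub
  simp only [measureReal_def] at hunion hmono
  linarith

end

theorem lower_bound_one_dim_general (N : ℕ) (hN : 1 ≤ N) (a : ℝ) (ha : a ∈ Icc (0:ℝ) 1)
    (n : ℕ) :
    (1/2) * ((1 + N) * (N : ℝ) ^ (n+1) / (qt N (n+2) * qt N (n+3))) ≤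
      ⨆ y : Icc (0:ℝ) 1,
        |(GNa N a {x ∈ Icc (0:ℝ) 1 | sSeq N a x n ∈ Icc (0:ℝ) y}).toReal
          - (GN N (Icc (0:ℝ) y)).toReal| := by
  have := isFiniteMeasure_GN hN
  have := isFiniteMeasure_GNa hN ha.1
  have hjump := le_two_mul_of_jump (t := (invBranch N)^[n] a)
    (F := fun y => (GNa N a {x ∈ Icc (0:ℝ) 1 | sSeq N a x n ∈ Icc (0:ℝ) y}).toReal)
    (G := fun y => (GN N (Icc (0:ℝ) y)).toReal)
    (fun y hy => GNa_sSeq_add_cylinder_le hN ha n hy)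
    (fun y hy => GN_Icc_toReal_sub_le hN hy.le)
    (fun y hy => abs_sub_le_iSup_Icc
      (fun y => {x ∈ Icc (0:ℝ) 1 | sSeq N a x n ∈ Icc (0:ℝ) y})
      (fun z hz => by simp [Icc_eq_empty_of_lt hz])
      (hy.trans ((mapsTo_invBranch N).iterate n ha).2))
  have hcyl := v_le_cylinder_mass hN ha n
  rw [← GNa_cylinder_toReal hN ha n] at hcyl
  linarith

/-- For every `a ∈ I` and `n ≥ 1`,
`(1/2) v_{N(n)}(1) ≤ sup_{y ∈ I} |G_{N,a}(s_{n,a} ∈ [0,y]) − G_N([0,y])|`, where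
`v_{N(n)}(1) = (1+N) N^{n+1}/(q̃_{n+1} q̃_{n+2})`. -/
theorem lower_bound_one_dim (N : ℕ) (hN : 1 ≤ N) (a : ℝ) (ha : a ∈ Icc (0:ℝ) 1)
    (n : ℕ) (hn : 1 ≤ n) :
    (1/2) * ((1 + N) * (N : ℝ) ^ (n+1) / (qt N (n+2) * qt N (n+3))) ≤
      ⨆ y : Icc (0:ℝ) 1,
        |(GNa N a {x ∈ Icc (0:ℝ) 1 | sSeq N a x n ∈ Icc (0:ℝ) y}).toReal
          - (GN N (Icc (0:ℝ) y)).toReal| :=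
  lower_bound_one_dim_general N hN a ha n
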